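/- Let 0 < a < b < 1 and let p follow the Reciprocal(a, b) distribution with density f(x) = 1/((log b − log a)·x) on [a, b]. Let I_k := ∫_a^b (1−p)^k f(p) dp and pass_{Reciprocal(a,b)}@k := 1 − I_k. Then I_k = Θ((1−a)^k / k) as k → ∞ (i.e., there exist constants 0 < c₁ ≤ c₂ and k₀ such that for all k ≥ k₀, c₁·(1−a)^k/k ≤ I_k ≤ c₂·(1−a)^k/k), and consequently −log(pass_{Reciprocal(a,b)}@k) = Θ((1−a)^k / k); in particular the negative log aggregate success rate converges to 0 exponentially fast in k and is not a power law in k. -/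

import Mathlib

/-!
On `[a, b]` the density `1 / ((log b - log a) p)` lies between two positive constants, so `I_k`
has the order of `∫_a^b (1 - p)^k dp = ((1 - a)^(k+1) - (1 - b)^(k+1)) / (k + 1)`, which is
`Θ((1 - a)^k / k)` because `1 - b < 1 - a`. Hence `I_k → 0`, and since `-log (1 - x) ~ x` at `0`,
`-log (1 - I_k)` has the same order.
-/

open MeasureTheory Real Filter Topology Asymptotics Set

lemma integral_one_sub_pow (a b : ℝ) (k : ℕ) :
    ∫ p in a..b, (1 - p) ^ k = ((1 - a) ^ (k + 1) - (1 - b) ^ (k + 1)) / (k + 1) := by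
  rw [intervalIntegral.integral_comp_sub_left (fun x => x ^ k), integral_pow]

lemma isEquivalent_natCast_add_one : (fun k : ℕ => (k : ℝ) + 1) ~[atTop] fun k => (k : ℝ) :=
  IsEquivalent.refl.add_isLittleO <| (isLittleO_one_left_iff ℝ).2 <| by
    simpa using tendsto_natCast_atTop_atTop

lemma isTheta_integral_one_sub_pow {a b : ℝ} (hab : a < b) (hb : b ≤ 1) :
    (fun k : ℕ => ∫ p in a..b, (1 - p) ^ k) =Θ[atTop] fun k => (1 - a) ^ k / k := by
  simp_rw [integral_one_sub_pow]
  have hnum : (fun k : ℕ => (1 - a) ^ (k + 1) - (1 - b) ^ (k + 1)) ~[atTop]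
      fun k => (1 - a) ^ (k + 1) :=
    IsEquivalent.refl.sub_isLittleO <|
      (isLittleO_pow_pow_of_lt_left (sub_nonneg.2 hb) (by linarith)).comp_tendsto
        (tendsto_add_atTop_nat 1)
  refine IsTheta.div (hnum.isTheta.trans ?_) isEquivalent_natCast_add_one.isTheta
  simpa only [pow_succ'] using
    (isTheta_const_mul_left (sub_pos.2 (hab.trans_le hb)).ne').2
      (isTheta_refl (fun k : ℕ => (1 - a) ^ k) atTop)

lemma isTheta_integral_mul_of_bounds {ι : Type*} {l : Filter ι} {F : ι → ℝ → ℝ}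
    {w : ℝ → ℝ} {a b m M : ℝ} (hab : a ≤ b) (hF : ∀ i, ContinuousOn (F i) (Icc a b))
    (hF0 : ∀ i, ∀ x ∈ Icc a b, 0 ≤ F i x) (hw : ContinuousOn w (Icc a b)) (hm : 0 < m)
    (hmw : ∀ x ∈ Icc a b, m ≤ w x) (hwM : ∀ x ∈ Icc a b, w x ≤ M) :
    (fun i => ∫ x in a..b, F i x * w x) =Θ[l] fun i => ∫ x in a..b, F i x := by
  rw [← uIcc_of_le hab] at hF hw
  have hint i : IntervalIntegrable (F i) volume a b := (hF i).intervalIntegrable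
  have hintw i : IntervalIntegrable (fun x => F i x * w x) volume a b :=
    ((hF i).mul hw).intervalIntegrable
  have hlower i : (∫ x in a..b, F i x) * m ≤ ∫ x in a..b, F i x * w x := by
    rw [← intervalIntegral.integral_mul_const]
    exact intervalIntegral.integral_mono_on hab ((hint i).mul_const m) (hintw i)
      fun x hx => mul_le_mul_of_nonneg_left (hmw x hx) (hF0 i x hx)
  have hupper i : ∫ x in a..b, F i x * w x ≤ (∫ x in a..b, F i x) * M := by
    rw [← intervalIntegral.integral_mul_const]
    exact intervalIntegral.integral_mono_on hab (hintw i) ((hint i).mul_const M)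
      fun x hx => mul_le_mul_of_nonneg_left (hwM x hx) (hF0 i x hx)
  have hnonneg i : 0 ≤ ∫ x in a..b, F i x := intervalIntegral.integral_nonneg hab (hF0 i)
  have hnonneg_w i : 0 ≤ ∫ x in a..b, F i x * w x :=
    (mul_nonneg (hnonneg i) hm.le).trans (hlower i)
  refine ⟨.of_bound M (.of_forall fun i => ?_), .of_bound m⁻¹ (.of_forall fun i => ?_)⟩
  · rw [norm_of_nonneg (hnonneg_w i), norm_of_nonneg (hnonneg i), mul_comm]
    exact hupper i
  · rw [norm_of_nonneg (hnonneg_w i), norm_of_nonneg (hnonneg i), ← div_eq_inv_mul,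
      le_div_iff₀ hm]
    exact hlower i

lemma isEquivalent_neg_log_one_sub : (fun x : ℝ => -log (1 - x)) ~[𝓝 0] id := by
  have h : HasDerivAt (fun x : ℝ => -log (1 - x)) 1 0 := by
    simpa using ((hasDerivAt_id (0 : ℝ)).const_sub 1).log (by norm_num) |>.fun_neg
  simp only [hasDerivAt_iff_isLittleO, sub_zero, log_one, neg_zero, smul_eq_mul, mul_one] at h
  exact h.isEquivalent

lemma exists_bounds_of_isTheta {α : Type*} {l : Filter α} {f g : α → ℝ} (h : f =Θ[l] g)
    (hf : ∀ᶠ x in l, 0 ≤ f x) (hg : ∀ᶠ x in l, 0 ≤ g x) :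
    ∃ c₁ c₂ : ℝ, 0 < c₁ ∧ c₁ ≤ c₂ ∧
      ∀ᶠ x in l, c₁ * g x ≤ f x ∧ f x ≤ c₂ * g x := by
  obtain ⟨c₂, hc₂, hfg⟩ := h.isBigO.exists_pos
  obtain ⟨c, hc, hgf⟩ := h.isBigO_symm.exists_pos
  refine ⟨min c⁻¹ c₂, c₂, by positivity, min_le_right _ _, ?_⟩
  filter_upwards [hfg.bound, hgf.bound, hf, hg] with x hfx hgx hf0 hg0
  rw [norm_of_nonneg hf0, norm_of_nonneg hg0] at hfx hgx
  refine ⟨?_, hfx⟩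
  calc min c⁻¹ c₂ * g x ≤ c⁻¹ * g x := by gcongr; exact min_le_left _ _
    _ ≤ f x := by rwa [inv_mul_le_iff₀ hc]

section Reciprocal

variable {a b : ℝ} (ha : 0 < a) (hab : a < b)

include ha hab in
lemma integral_one_sub_pow_mul_reciprocal_nonneg (hb : b ≤ 1) (k : ℕ) :
    0 ≤ ∫ p in a..b, (1 - p) ^ k * (1 / ((log b - log a) * p)) :=
  intervalIntegral.integral_nonneg hab.le fun p hp =>
    mul_nonneg (pow_nonneg (by linarith [hp.2]) k)
      (one_div_nonneg.2 (mul_nonneg (sub_nonneg.2 (log_le_log ha hab.le))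
        (ha.trans_le hp.1).le))

include ha hab in
lemma isTheta_integral_one_sub_pow_mul_reciprocal (hb : b ≤ 1) :
    (fun k : ℕ => ∫ p in a..b, (1 - p) ^ k * (1 / ((log b - log a) * p))) =Θ[atTop]
      fun k => (1 - a) ^ k / k := by
  have hL : 0 < log b - log a := sub_pos.2 (log_lt_log ha hab)
  refine (isTheta_integral_mul_of_bounds (m := 1 / ((log b - log a) * b))
    (M := 1 / ((log b - log a) * a)) hab.le (fun k => by fun_prop)
    (fun k p hp => pow_nonneg (by linarith [hp.2]) k)
    (continuousOn_const.div (by fun_prop) fun p hp => (mul_pos hL (ha.trans_le hp.1)).ne')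
    (one_div_pos.2 (mul_pos hL (ha.trans hab)))
    (fun p hp => one_div_le_one_div_of_le (mul_pos hL (ha.trans_le hp.1))
      (by gcongr; exact hp.2))
    (fun p hp => one_div_le_one_div_of_le (mul_pos hL ha) (by gcongr; exact hp.1))).trans ?_
  exact isTheta_integral_one_sub_pow hab hb

end Reciprocal

/-- **Reciprocal distribution: exponential, not power-law, decay.** If
per-attempt success probabilities follow `Reciprocal(a, b)` with `0 < a < b < 1`
and density `1/((log b - log a)·x)` on `[a, b]`, then
`I_k = ∫_a^b (1-p)^k f(p) dp = Θ((1-a)^k / k)` and consequently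
`-log(pass_{Reciprocal(a,b)}@k) = Θ((1-a)^k / k)` as `k → ∞`. -/
theorem neg_log_pass_reciprocal_exponential
    (a b : ℝ) (ha : 0 < a) (hab : a < b) (hb : b < 1) :
    (∃ c₁ c₂ : ℝ, 0 < c₁ ∧ c₁ ≤ c₂ ∧ ∃ k₀ : ℕ, ∀ k : ℕ, k₀ ≤ k →
      c₁ * (1 - a) ^ k / (k : ℝ)
          ≤ (∫ p in a..b, (1 - p) ^ k * (1 / ((Real.log b - Real.log a) * p))) ∧
        (∫ p in a..b, (1 - p) ^ k * (1 / ((Real.log b - Real.log a) * p)))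
          ≤ c₂ * (1 - a) ^ k / (k : ℝ)) ∧
    (∃ c₁ c₂ : ℝ, 0 < c₁ ∧ c₁ ≤ c₂ ∧ ∃ k₀ : ℕ, ∀ k : ℕ, k₀ ≤ k →
      c₁ * (1 - a) ^ k / (k : ℝ)
          ≤ -Real.log (1 - ∫ p in a..b, (1 - p) ^ k *
              (1 / ((Real.log b - Real.log a) * p))) ∧
        -Real.log (1 - ∫ p in a..b, (1 - p) ^ k *
              (1 / ((Real.log b - Real.log a) * p)))
          ≤ c₂ * (1 - a) ^ k / (k : ℝ)) := by
  have hI := isTheta_integral_one_sub_pow_mul_reciprocal ha hab hb.le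
  have hI0 := integral_one_sub_pow_mul_reciprocal_nonneg ha hab hb.le
  have hg0 (k : ℕ) : 0 ≤ (1 - a) ^ k / k :=
    div_nonneg (pow_nonneg (by linarith) k) k.cast_nonneg
  have hlim := hI.isBigO.trans_tendsto <|
    (tendsto_pow_atTop_nhds_zero_of_lt_one (by linarith) (by linarith)).div_atTop
      tendsto_natCast_atTop_atTop
  have hlog := (isEquivalent_neg_log_one_sub.comp_tendsto hlim).isTheta.trans hI
  obtain ⟨c₁, c₂, hc₁, hc₁₂, hIbound⟩ :=
    exists_bounds_of_isTheta hI (.of_forall hI0) (.of_forall hg0)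
  obtain ⟨d₁, d₂, hd₁, hd₁₂, hlogbound⟩ := exists_bounds_of_isTheta hlog
    ((hlim.eventually (gt_mem_nhds one_pos)).mono fun k hk =>
      neg_nonneg.2 (log_nonpos (by linarith [hI0 k]) (by linarith [hI0 k])))
    (.of_forall hg0)
  simp only [mul_div_assoc]
  exact ⟨⟨c₁, c₂, hc₁, hc₁₂, eventually_atTop.1 hIbound⟩,
    ⟨d₁, d₂, hd₁, hd₁₂, eventually_atTop.1 hlogbound⟩⟩
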